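/- arXiv:1104.2105 — 8 statements merged into one kernel-verified Lean document; each statement's English description precedes it below -/
import Mathlib

section
/- Let M be an abelian group. Then UM is a group under the given multiplication, π : UM → M is a surjective group homomorphism, its kernel is the subgroup {1 + t : t ∈ M ⊗ M}, this kernel is isomorphic to M ⊗_ℤ M as a group, and it is contained in the center of UM. Thus 1 → M ⊗ M → UM → M → 1 is a central extension of groups. -/
open scoped TensorProduct

/-- Elements `1 + m + t` of `UM ⊆ (T^{<3}M)^×` are encoded as pairs
`(m, t) : M × (M ⊗[ℤ] M)`; the element `1 + m + t` corresponds to `(m, t)`. -/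
theorem self_cup_stmt_0 (M : Type) [AddCommGroup M]
    -- the multiplication `(1+m+t)(1+m'+t') = 1 + (m+m') + (m ⊗ m' + t + t')`
    (mul : M × (M ⊗[ℤ] M) → M × (M ⊗[ℤ] M) → M × (M ⊗[ℤ] M))
    (hmul : ∀ x y, mul x y = (x.1 + y.1, x.1 ⊗ₜ[ℤ] y.1 + x.2 + y.2))
    -- the identity element `1 = 1 + 0 + 0`
    (one : M × (M ⊗[ℤ] M)) (hone : one = (0, 0))
    -- the projection `π : UM → M`, `1 + m + t ↦ m`
    (π : M × (M ⊗[ℤ] M) → M) (hπ : ∀ x, π x = x.1)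
    -- the inclusion `M ⊗ M → UM`, `t ↦ 1 + t`
    (ι : (M ⊗[ℤ] M) → M × (M ⊗[ℤ] M)) (hι : ∀ t, ι t = (0, t)) :
    -- `UM` is a group under the given multiplication:
    (∀ x y z, mul (mul x y) z = mul x (mul y z)) ∧
    (∀ x, mul one x = x) ∧
    (∀ x, mul x one = x) ∧
    (∀ x, ∃ y, mul x y = one ∧ mul y x = one) ∧
    -- `π` is a surjective group homomorphism (to the additive group `M`):
    (∀ x y, π (mul x y) = π x + π y) ∧
    Function.Surjective π ∧
    -- its kernel is the subgroup `{1 + t : t ∈ M ⊗ M}`, the image of `ι`: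
    (∀ x, π x = 0 ↔ ∃ t, x = ι t) ∧
    -- this kernel is isomorphic to `M ⊗_ℤ M` as a group: `ι` is an injective
    -- homomorphism from the additive group `M ⊗ M` with image the kernel of `π`:
    Function.Injective ι ∧
    (∀ t t', mul (ι t) (ι t') = ι (t + t')) ∧
    -- and the kernel is contained in the center of `UM`:
    (∀ t x, mul (ι t) x = mul x (ι t)) := by
  refine ⟨?_, ?_, ?_, ?_, ?_, ?_, ?_, ?_, ?_, ?_⟩
  · intro x y z
    simp [hmul, TensorProduct.add_tmul, TensorProduct.tmul_add, add_assoc, add_comm,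
      add_left_comm]
  · intro x; simp [hmul, hone]
  · intro x; simp [hmul, hone]
  · intro x
    exact ⟨(-x.1, x.1 ⊗ₜ[ℤ] x.1 - x.2), by
      simp [hmul, hone, TensorProduct.tmul_neg], by
      simp [hmul, hone, TensorProduct.neg_tmul]; abel⟩
  · intro x y; simp [hmul, hπ]
  · intro m; exact ⟨(m, 0), hπ _⟩
  · intro x
    constructor
    · intro h; exact ⟨x.2, by rw [hι]; ext <;> simp [← hπ x, h]⟩
    · rintro ⟨t, rfl⟩; simp [hπ, hι]
  · intro t t' h; simpa [hι, Prod.ext_iff] using h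
  · intro t t'; simp [hmul, hι]
  · intro t x; simp [hmul, hι, add_comm]
end

section
/- Let M be an abelian group, G a group, and σ : M → G a function such that the map (m, m') ↦ σ(m)σ(m')σ(m+m')⁻¹ takes values in an abelian subgroup H of G and is ℤ-bilinear as a map M × M → H. Then there exists a unique group homomorphism f : UM → G with f ∘ s = σ. -/
open scoped TensorProduct

/-- The group `UM`: the kernel of `(T^{<3}M)^× → ℤ^× = {±1}`, where
`T^{<3}M = ℤ ⊕ M ⊕ (M ⊗_ℤ M)` is the tensor algebra of `M` over `ℤ` truncated in
degrees `< 3`.  An element `1 + m + t` (with `m : M`, `t : M ⊗[ℤ] M`) is encoded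
as the pair `⟨m, t⟩`, and the multiplication is
`(1+m+t)(1+m'+t') = 1 + (m+m') + (m ⊗ m' + t + t')`. -/
@[ext]
structure UGroup (M : Type) [AddCommGroup M] where
  m : M
  t : TensorProduct ℤ M M

namespace UGroup

variable {M : Type} [AddCommGroup M]

noncomputable instance : Mul (UGroup M) :=
  ⟨fun x y => ⟨x.m + y.m, x.m ⊗ₜ[ℤ] y.m + x.t + y.t⟩⟩
noncomputable instance : One (UGroup M) := ⟨⟨0, 0⟩⟩
noncomputable instance : Inv (UGroup M) :=
  ⟨fun x => ⟨-x.m, x.m ⊗ₜ[ℤ] x.m - x.t⟩⟩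

@[simp] lemma mul_m (x y : UGroup M) : (x * y).m = x.m + y.m := rfl
@[simp] lemma mul_t (x y : UGroup M) : (x * y).t = x.m ⊗ₜ[ℤ] y.m + x.t + y.t := rfl
@[simp] lemma one_m : (1 : UGroup M).m = 0 := rfl
@[simp] lemma one_t : (1 : UGroup M).t = 0 := rfl
@[simp] lemma inv_m (x : UGroup M) : (x⁻¹).m = -x.m := rfl
@[simp] lemma inv_t (x : UGroup M) : (x⁻¹).t = x.m ⊗ₜ[ℤ] x.m - x.t := rfl

noncomputable instance : Group (UGroup M) where
  mul_assoc x y z := by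
    ext
    · simp [add_assoc]
    · simp [TensorProduct.add_tmul, TensorProduct.tmul_add]
      abel
  one_mul x := by ext <;> simp
  mul_one x := by ext <;> simp
  inv_mul_cancel x := by
    ext
    · simp
    · simp [TensorProduct.neg_tmul]
      abel

/-- The set-theoretic section `s : M → UM`, `m ↦ 1 + m`. -/
noncomputable def s (m : M) : UGroup M := ⟨m, 0⟩

end UGroup

/-!
Since `1 + m + t = (1 + t)(1 + m)` and `1 + m ⊗ m' = s(m) s(m') s(m + m')⁻¹`, the group `UM` is
generated by `s(M)`, which gives uniqueness. For existence, the bilinear cocycle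
`β(m, m') = σ(m) σ(m') σ(m + m')⁻¹` induces a homomorphism `β : M ⊗ M → H`, and one sets
`f(1 + m + t) = σ(m) β(t)`. This is multiplicative as soon as every `β(m, m')` commutes with every
`σ(a)`, which follows by comparing the two bracketings of `σ(a) σ(m) σ(m')`: bilinearity and the
commutativity of `H` reduce their difference to conjugation of `β(m, m')` by `σ(a)`.
-/

open scoped IsMulCommutative

open Multiplicative

namespace TensorProduct

section Monoid

variable {R M N G : Type} [CommSemiring R] [AddCommMonoid M] [AddCommMonoid N] [Module R M]
  [Module R N] [Monoid G]

lemma multiplicative_hom_ext {f g : Multiplicative (M ⊗[R] N) →* G}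
    (h : ∀ m n, f (ofAdd (m ⊗ₜ n)) = g (ofAdd (m ⊗ₜ n))) : f = g := by
  suffices ∀ t : M ⊗[R] N, f (ofAdd t) = g (ofAdd t) from MonoidHom.ext fun t => this t.toAdd
  intro t
  induction t using TensorProduct.induction_on with
  | zero => simp only [ofAdd_zero, map_one]
  | tmul m n => exact h m n
  | add t t' ht ht' => rw [ofAdd_add, map_mul, map_mul, ht, ht']

lemma commute_of_commute_tmul (τ : Multiplicative (M ⊗[R] N) →* G) {x : G}
    (h : ∀ m n, Commute x (τ (ofAdd (m ⊗ₜ n)))) (t : M ⊗[R] N) : Commute x (τ (ofAdd t)) := by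
  induction t using TensorProduct.induction_on with
  | zero => simpa only [ofAdd_zero, map_one] using Commute.one_right x
  | tmul m n => exact h m n
  | add t t' ht ht' => rw [ofAdd_add, map_mul]; exact ht.mul_right ht'

end Monoid

lemma exists_monoidHom_ofAdd_tmul_eq {M N G : Type} [AddCommGroup M] [AddCommGroup N] [Group G]
    (β : M → N → G) (H : Subgroup G) [IsMulCommutative H] (hmem : ∀ m n, β m n ∈ H)
    (hleft : ∀ m₁ m₂ n, β (m₁ + m₂) n = β m₁ n * β m₂ n)
    (hright : ∀ m n₁ n₂, β m (n₁ + n₂) = β m n₁ * β m n₂) :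
    ∃ τ : Multiplicative (M ⊗[ℤ] N) →* G, ∀ m n, τ (ofAdd (m ⊗ₜ n)) = β m n := by
  let b : M →+ N →+ Additive H :=
    AddMonoidHom.mk'
      (fun m => AddMonoidHom.mk' (fun n => Additive.ofMul ⟨β m n, hmem m n⟩)
        fun n₁ n₂ => congrArg Additive.ofMul (Subtype.ext (hright m n₁ n₂)))
      fun m₁ m₂ => AddMonoidHom.ext fun n => congrArg Additive.ofMul (Subtype.ext (hleft m₁ m₂ n))
  have hb : ∀ (r : ℤ) m n, b (r • m) n = b m (r • n) := fun r m n => by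
    rw [map_zsmul, AddMonoidHom.smul_apply, map_zsmul]
  exact ⟨H.subtype.comp (AddMonoidHom.toMultiplicativeLeft (liftAddHom b hb)), fun _ _ => rfl⟩

end TensorProduct

namespace UGroup

variable {M G : Type} [AddCommGroup M] [Group G]

def cocycle (σ : M → G) (m m' : M) : G := σ m * σ m' * (σ (m + m'))⁻¹

section Cocycle

variable (σ : M → G)

lemma mul_eq_cocycle_mul (m m' : M) : σ m * σ m' = cocycle σ m m' * σ (m + m') := by
  rw [cocycle, inv_mul_cancel_right]

lemma map_cocycle {G' : Type} [Group G'] (f : G →* G') (m m' : M) :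
    f (cocycle σ m m') = cocycle (f ∘ σ) m m' := by
  simp only [cocycle, map_mul, map_inv, Function.comp_apply]

lemma cocycle_mul_cocycle_add (a m m' : M) :
    cocycle σ a m * cocycle σ (a + m) m' =
      σ a * cocycle σ m m' * (σ a)⁻¹ * cocycle σ a (m + m') := by
  simp only [cocycle, add_assoc]
  group

lemma commute_cocycle (hcomm : ∀ m₁ m₂ m₃ m₄, Commute (cocycle σ m₁ m₂) (cocycle σ m₃ m₄))
    (hleft : ∀ m₁ m₂ m', cocycle σ (m₁ + m₂) m' = cocycle σ m₁ m' * cocycle σ m₂ m')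
    (hright : ∀ m m₁' m₂', cocycle σ m (m₁' + m₂') = cocycle σ m m₁' * cocycle σ m m₂')
    (a m m' : M) : Commute (σ a) (cocycle σ m m') := by
  have h := cocycle_mul_cocycle_add σ a m m'
  rw [hleft a m m', hright a m m', ← mul_assoc,
    ((hcomm a m m m').mul_left (hcomm a m' m m')).eq] at h
  exact (eq_mul_inv_iff_mul_eq.mp (mul_right_cancel h)).symm

end Cocycle

noncomputable def ofTensor : Multiplicative (M ⊗[ℤ] M) →* UGroup M where
  toFun t := ⟨0, t.toAdd⟩
  map_one' := rfl
  map_mul' t t' := by ext <;> simp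

lemma ofTensor_tmul (m m' : M) : ofTensor (ofAdd (m ⊗ₜ m')) = cocycle s m m' := by
  ext
  · simp [ofTensor, cocycle, s]
  · simp only [ofTensor, MonoidHom.coe_mk, OneHom.coe_mk, toAdd_ofAdd, cocycle, s, mul_t, mul_m,
      inv_m, inv_t, neg_add_rev, TensorProduct.tmul_add, TensorProduct.tmul_neg,
      TensorProduct.add_tmul, add_zero, sub_zero]
    abel

lemma ofTensor_mul_s (x : UGroup M) : ofTensor (ofAdd x.t) * s x.m = x := by
  ext <;> simp [ofTensor, s]

@[ext]
lemma hom_ext {f g : UGroup M →* G} (h : ∀ m, f (s m) = g (s m)) : f = g := by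
  have htensor : f.comp ofTensor = g.comp ofTensor :=
    TensorProduct.multiplicative_hom_ext fun m m' => by
      simp only [MonoidHom.comp_apply, ofTensor_tmul, map_cocycle]
      rw [show ⇑f ∘ s = ⇑g ∘ s from funext h]
  ext x
  rw [← ofTensor_mul_s x, map_mul, map_mul, h, ← MonoidHom.comp_apply, htensor,
    MonoidHom.comp_apply]

section Lift

variable (σ : M → G) (τ : Multiplicative (M ⊗[ℤ] M) →* G)
  (hτ : ∀ m m', τ (ofAdd (m ⊗ₜ m')) = cocycle σ m m')
  (hcomm : ∀ a m m', Commute (σ a) (cocycle σ m m'))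

noncomputable def lift : UGroup M →* G :=
  MonoidHom.mk' (fun x => σ x.m * τ (ofAdd x.t)) fun x y => by
    have hcomm_τ (a : M) (t : M ⊗[ℤ] M) : Commute (σ a) (τ (ofAdd t)) :=
      TensorProduct.commute_of_commute_tmul τ (fun m m' => hτ m m' ▸ hcomm a m m') t
    calc σ (x.m + y.m) * τ (ofAdd (x.m ⊗ₜ y.m + x.t + y.t))
        = cocycle σ x.m y.m * σ (x.m + y.m) * τ (ofAdd x.t) * τ (ofAdd y.t) := by
          rw [ofAdd_add, ofAdd_add, map_mul, map_mul, hτ, ← mul_assoc, ← mul_assoc,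
            (hcomm _ _ _).eq]
      _ = σ x.m * (σ y.m * τ (ofAdd x.t)) * τ (ofAdd y.t) := by
          rw [← mul_eq_cocycle_mul]
          simp only [mul_assoc]
      _ = σ x.m * τ (ofAdd x.t) * (σ y.m * τ (ofAdd y.t)) := by
          rw [(hcomm_τ y.m x.t).eq]
          simp only [mul_assoc]

lemma lift_s (m : M) : lift σ τ hτ hcomm (s m) = σ m := by
  simp [lift, s]

end Lift

end UGroup

/-- Universal property of `UM` (Proposition 2.1): if `σ : M → G` is a set map to a
group `G` such that `(m, m') ↦ σ(m) σ(m') σ(m+m')⁻¹` takes values in an abelian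
subgroup `H` of `G` and is ℤ-bilinear (i.e. bi-additive) as a map `M × M → H`, then
`σ` factors uniquely through a group homomorphism `f : UM → G` with `f ∘ s = σ`. -/
theorem self_cup_stmt_1 (M : Type) [AddCommGroup M] (G : Type) [Group G]
    (σ : M → G) (H : Subgroup G)
    (habelian : ∀ x ∈ H, ∀ y ∈ H, x * y = y * x)
    (hmem : ∀ m m' : M, σ m * σ m' * (σ (m + m'))⁻¹ ∈ H)
    (hbil_left : ∀ m₁ m₂ m' : M,
      σ (m₁ + m₂) * σ m' * (σ (m₁ + m₂ + m'))⁻¹ =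
        (σ m₁ * σ m' * (σ (m₁ + m'))⁻¹) * (σ m₂ * σ m' * (σ (m₂ + m'))⁻¹))
    (hbil_right : ∀ m m₁' m₂' : M,
      σ m * σ (m₁' + m₂') * (σ (m + (m₁' + m₂')))⁻¹ =
        (σ m * σ m₁' * (σ (m + m₁'))⁻¹) * (σ m * σ m₂' * (σ (m + m₂'))⁻¹)) :
    ∃! f : UGroup M →* G, ∀ m : M, f (UGroup.s m) = σ m := by
  have : IsMulCommutative H := .of_setLike_mul_comm habelian
  obtain ⟨τ, hτ⟩ := TensorProduct.exists_monoidHom_ofAdd_tmul_eq (UGroup.cocycle σ) H hmem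
    hbil_left hbil_right
  have hcomm := UGroup.commute_cocycle σ
    (fun _ _ _ _ => habelian _ (hmem _ _) _ (hmem _ _)) hbil_left hbil_right
  refine ⟨UGroup.lift σ τ hτ hcomm, UGroup.lift_s σ τ hτ hcomm, fun f hf => ?_⟩
  exact UGroup.hom_ext fun m => by rw [hf, UGroup.lift_s]
end

section
/- Let M be an abelian group and let a : UM → (UM)^{ab} denote the abelianization map. For every abelian group N and every quadratic map q : M → N there exists a unique group homomorphism f : (UM)^{ab} → N with f(a(s(m))) = q(m) for all m ∈ M; that is, the composite a ∘ s : M → (UM)^{ab} is the universal quadratic map out of M to an abelian group. -/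
open scoped TensorProduct

/-- A quadratic map `q : M → N` of abelian groups: a function such that
`(m, m') ↦ q(m+m') − q(m) − q(m')` is ℤ-bilinear (i.e. bi-additive). -/
def IsQuadraticMap {M N : Type} [AddCommGroup M] [AddCommGroup N] (q : M → N) : Prop :=
  (∀ m₁ m₂ m' : M,
      q (m₁ + m₂ + m') - q (m₁ + m₂) - q m' =
        (q (m₁ + m') - q m₁ - q m') + (q (m₂ + m') - q m₂ - q m')) ∧
  (∀ m m₁' m₂' : M,
      q (m + (m₁' + m₂')) - q m - q (m₁' + m₂') =
        (q (m + m₁') - q m - q m₁') + (q (m + m₂') - q m - q m₂'))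

/-! A quadratic map `q` has the polar form `B(m ⊗ m') = q(m + m') - q m - q m'`, and
`1 + m + t ↦ q m - B t` is a homomorphism `UM → N`: this gives existence. Uniqueness holds
because `UM` is generated by `s(M)`: every element is `s m · (1 + t)`, and
`1 + m ⊗ m' = s m · s m' · s(m + m')⁻¹`. -/

namespace IsQuadraticMap

variable {M N : Type} [AddCommGroup M] [AddCommGroup N] {q : M → N}

noncomputable def polar (hq : IsQuadraticMap q) : M ⊗[ℤ] M →ₗ[ℤ] N :=
  TensorProduct.lift <| AddMonoidHom.toIntLinearMap <| AddMonoidHom.mk'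
    (fun m => (AddMonoidHom.mk' (fun m' => q (m + m') - q m - q m') (hq.2 m)).toIntLinearMap)
    (fun m₁ m₂ => LinearMap.ext (hq.1 m₁ m₂))

theorem polar_tmul (hq : IsQuadraticMap q) (m m' : M) :
    hq.polar (m ⊗ₜ m') = q (m + m') - q m - q m' :=
  rfl

noncomputable def toUGroupHom (hq : IsQuadraticMap q) : UGroup M →* Multiplicative N :=
  MonoidHom.mk' (fun x => Multiplicative.ofAdd (q x.m - hq.polar x.t)) fun x y => by
    rw [← ofAdd_add, UGroup.mul_t, UGroup.mul_m, map_add, map_add, polar_tmul]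
    congr 1
    abel

theorem toUGroupHom_s (hq : IsQuadraticMap q) (m : M) :
    hq.toUGroupHom (UGroup.s m) = Multiplicative.ofAdd (q m) := by
  simp [toUGroupHom, UGroup.s]

end IsQuadraticMap

namespace UGroup

variable {M : Type} [AddCommGroup M]

theorem mk_zero_tmul (m m' : M) :
    (⟨0, m ⊗ₜ m'⟩ : UGroup M) = s m * s m' * (s (m + m'))⁻¹ := by
  ext
  · simp [s]
  · simp only [s, mul_t, inv_t, inv_m, mul_m, TensorProduct.add_tmul, TensorProduct.tmul_add,
      TensorProduct.tmul_neg]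
    abel

theorem mk_zero_add (t t' : M ⊗[ℤ] M) :
    (⟨0, t + t'⟩ : UGroup M) = ⟨0, t⟩ * ⟨0, t'⟩ := by
  ext <;> simp

theorem mk_eq_s_mul (x : UGroup M) : x = s x.m * ⟨0, x.t⟩ := by
  ext <;> simp [s]

theorem closure_range_s : Subgroup.closure (Set.range (s : M → UGroup M)) = ⊤ := by
  set H := Subgroup.closure (Set.range (s : M → UGroup M))
  have hs (m : M) : s m ∈ H := Subgroup.subset_closure ⟨m, rfl⟩
  have hcentral (t : M ⊗[ℤ] M) : (⟨0, t⟩ : UGroup M) ∈ H := by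
    induction t using TensorProduct.induction_on with
    | zero => exact H.one_mem
    | tmul m m' =>
      rw [mk_zero_tmul]
      exact H.mul_mem (H.mul_mem (hs m) (hs m')) (H.inv_mem (hs (m + m')))
    | add t t' ht ht' =>
      rw [mk_zero_add]
      exact H.mul_mem ht ht'
  refine eq_top_iff.2 fun x _ => ?_
  rw [mk_eq_s_mul x]
  exact H.mul_mem (hs x.m) (hcentral x.t)

end UGroup

/-- (Corollary 2.3, first part.)  The map `M → (UM)^{ab}` given by composing
`s : M → UM` with the abelianization map is universal for quadratic maps from `M`
to an abelian group: every quadratic map `q : M → N` factors through it via a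
unique group homomorphism `f : (UM)^{ab} → N`. -/
theorem self_cup_stmt_2 (M : Type) [AddCommGroup M] (N : Type) [AddCommGroup N]
    (q : M → N) (hq : IsQuadraticMap q) :
    ∃! f : Abelianization (UGroup M) →* Multiplicative N,
      ∀ m : M, f (Abelianization.of (UGroup.s m)) = Multiplicative.ofAdd (q m) := by
  refine ⟨Abelianization.lift hq.toUGroupHom, fun m => by
    rw [Abelianization.lift_apply_of, hq.toUGroupHom_s], fun f hf => ?_⟩
  refine Abelianization.hom_ext _ _ <| MonoidHom.eq_of_eqOn_dense UGroup.closure_range_s ?_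
  rintro _ ⟨m, rfl⟩
  simp [hf m, hq.toUGroupHom_s]
end

section
/- Let M be an abelian group. The composite M ⊗ M → UM → (UM)^{ab} (sending t to the class of 1 + t) factors through the canonical surjection M ⊗ M → S²M onto the symmetric square (the quotient of M ⊗ M by the subgroup generated by all m ⊗ m' − m' ⊗ m), and the resulting sequence of abelian groups 0 → S²M → (UM)^{ab} → M → 0, whose second map is induced by π, is exact. -/
open scoped TensorProduct

/-- The subgroup of `M ⊗[ℤ] M` generated by all `m ⊗ m' − m' ⊗ m`; the quotient
by it is the symmetric square `S²M`. -/
noncomputable def symSub (M : Type) [AddCommGroup M] : AddSubgroup (TensorProduct ℤ M M) :=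
  AddSubgroup.closure {x | ∃ m m' : M, x = m ⊗ₜ[ℤ] m' - m' ⊗ₜ[ℤ] m}

section Aux

variable {M : Type} [AddCommGroup M]

/-- quotient map onto `S²M` as an `AddMonoidHom`. -/
noncomputable def mkS : TensorProduct ℤ M M →+ (TensorProduct ℤ M M ⧸ symSub M) :=
  QuotientAddGroup.mk' (symSub M)

lemma mkS_apply (t : TensorProduct ℤ M M) : (mkS t : TensorProduct ℤ M M ⧸ symSub M)
    = QuotientAddGroup.mk t := rfl

lemma mkS_swap (m m' : M) : (mkS (m ⊗ₜ[ℤ] m') : TensorProduct ℤ M M ⧸ symSub M)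
    = mkS (m' ⊗ₜ[ℤ] m) := by
  rw [mkS_apply, mkS_apply, QuotientAddGroup.eq_iff_sub_mem]
  exact AddSubgroup.subset_closure ⟨m, m', rfl⟩

/-- The abelian group `M × S²M` with twisted multiplication. -/
@[ext]
structure VGroup (M : Type) [AddCommGroup M] where
  m : M
  t : TensorProduct ℤ M M ⧸ symSub M

namespace VGroup

noncomputable instance : Mul (VGroup M) :=
  ⟨fun x y => ⟨x.m + y.m, mkS (x.m ⊗ₜ[ℤ] y.m) + x.t + y.t⟩⟩
noncomputable instance : One (VGroup M) := ⟨⟨0, 0⟩⟩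
noncomputable instance : Inv (VGroup M) :=
  ⟨fun x => ⟨-x.m, mkS (x.m ⊗ₜ[ℤ] x.m) - x.t⟩⟩

@[simp] lemma mul_m (x y : VGroup M) : (x * y).m = x.m + y.m := rfl
@[simp] lemma mul_t (x y : VGroup M) : (x * y).t = mkS (x.m ⊗ₜ[ℤ] y.m) + x.t + y.t := rfl
@[simp] lemma one_m : (1 : VGroup M).m = 0 := rfl
@[simp] lemma one_t : (1 : VGroup M).t = 0 := rfl
@[simp] lemma inv_m (x : VGroup M) : (x⁻¹).m = -x.m := rfl
@[simp] lemma inv_t (x : VGroup M) : (x⁻¹).t = mkS (x.m ⊗ₜ[ℤ] x.m) - x.t := rfl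

noncomputable instance : CommGroup (VGroup M) where
  mul_assoc x y z := by
    ext
    · simp [add_assoc]
    · simp [TensorProduct.add_tmul, TensorProduct.tmul_add]
      abel
  one_mul x := by ext <;> simp
  mul_one x := by ext <;> simp
  inv_mul_cancel x := by
    ext
    · simp
    · simp [TensorProduct.neg_tmul]
      abel
  mul_comm x y := by
    ext
    · simp [add_comm]
    · simp [mkS_swap x.m y.m]
      abel

end VGroup

/-- The natural surjection `UM → V`. -/
noncomputable def toV : UGroup M →* VGroup M where
  toFun x := ⟨x.m, mkS x.t⟩
  map_one' := by ext <;> simp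
  map_mul' x y := by ext <;> simp

/-- Its factorization through the abelianization. -/
noncomputable def toVab : Abelianization (UGroup M) →* VGroup M :=
  Abelianization.lift toV

@[simp] lemma toVab_of (x : UGroup M) :
    (toVab (Abelianization.of x) : VGroup M) = ⟨x.m, mkS x.t⟩ := rfl

lemma of_sym_eq_one (m m' : M) :
    Abelianization.of (⟨0, m ⊗ₜ[ℤ] m' - m' ⊗ₜ[ℤ] m⟩ : UGroup M) = 1 := by
  have h : (⟨0, m ⊗ₜ[ℤ] m' - m' ⊗ₜ[ℤ] m⟩ : UGroup M)
      = UGroup.s m * UGroup.s m' * (UGroup.s m' * UGroup.s m)⁻¹ := by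
    ext
    · simp [UGroup.s]
      abel
    · simp [UGroup.s, TensorProduct.add_tmul, TensorProduct.tmul_add, TensorProduct.neg_tmul,
        TensorProduct.tmul_neg]
      abel
  rw [h, map_mul, map_inv, map_mul, map_mul]
  rw [mul_comm (Abelianization.of (UGroup.s m'))]
  group

end Aux

/-- (Remark 2.4(a).)  The composite `M ⊗ M → UM → (UM)^{ab}`, `t ↦ [1 + t]`,
factors through the canonical surjection `M ⊗ M → S²M`, and the resulting
sequence `0 → S²M → (UM)^{ab} → M → 0` (the second map being induced by `π`)
is exact. -/
theorem self_cup_stmt_4 (M : Type) [AddCommGroup M] :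
    ∃ πbar : Abelianization (UGroup M) →* Multiplicative M,
      (∀ x : UGroup M, πbar (Abelianization.of x) = Multiplicative.ofAdd x.m) ∧
      -- exactness at `M`:
      Function.Surjective πbar ∧
      -- the map `t ↦ [1 + t]` factors through `S²M = (M ⊗ M)/⟨m ⊗ m' − m' ⊗ m⟩`:
      ∃ jbar : ((TensorProduct ℤ M M) ⧸ symSub M) → Abelianization (UGroup M),
        (∀ t : TensorProduct ℤ M M,
          jbar (QuotientAddGroup.mk t) = Abelianization.of (⟨0, t⟩ : UGroup M)) ∧
        -- `jbar` is a homomorphism of (abelian) groups: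
        (∀ a b, jbar (a + b) = jbar a * jbar b) ∧
        -- exactness at `S²M`:
        Function.Injective jbar ∧
        -- exactness at `(UM)^{ab}`:
        (∀ y : Abelianization (UGroup M), πbar y = 1 ↔ ∃ a, jbar a = y) := by
  classical
  -- `π` as a monoid hom
  let p : UGroup M →* Multiplicative M :=
    { toFun := fun x => Multiplicative.ofAdd x.m
      map_one' := rfl
      map_mul' := fun x y => rfl }
  refine ⟨Abelianization.lift p, fun x => rfl, ?_, ?_⟩
  · intro m
    exact ⟨Abelianization.of (UGroup.s m.toAdd), rfl⟩
  · -- build `jbar`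
    let jAdd : TensorProduct ℤ M M →+ Additive (Abelianization (UGroup M)) :=
      { toFun := fun t => Additive.ofMul (Abelianization.of (⟨0, t⟩ : UGroup M))
        map_zero' := by
          have : (⟨0, 0⟩ : UGroup M) = 1 := rfl
          simp [this]
        map_add' := fun t t' => by
          have : (⟨0, t + t'⟩ : UGroup M) = ⟨0, t⟩ * ⟨0, t'⟩ := by
            ext <;> simp
          simp [this] }
    have hker : symSub M ≤ jAdd.ker := by
      rw [symSub, AddSubgroup.closure_le]
      rintro x ⟨m, m', rfl⟩
      show jAdd _ = 0
      simpa [jAdd] using congrArg Additive.ofMul (of_sym_eq_one m m')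
    let J : (TensorProduct ℤ M M ⧸ symSub M) →+ Additive (Abelianization (UGroup M)) :=
      QuotientAddGroup.lift (symSub M) jAdd hker
    refine ⟨fun a => (J a).toMul, fun t => rfl, fun a b => by simp [map_add], ?_, ?_⟩
    · -- injectivity
      intro a b hab
      obtain ⟨t, rfl⟩ := QuotientAddGroup.mk_surjective a
      obtain ⟨t', rfl⟩ := QuotientAddGroup.mk_surjective b
      have h : Abelianization.of (⟨0, t⟩ : UGroup M)
          = Abelianization.of (⟨0, t'⟩ : UGroup M) := hab
      have h2 := congrArg toVab h
      simp only [toVab_of, VGroup.mk.injEq] at h2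
      rw [← mkS_apply, ← mkS_apply, h2.2]
    · intro y
      constructor
      · rintro hy
        obtain ⟨x, rfl⟩ := (QuotientGroup.mk'_surjective (commutator (UGroup M)) : Function.Surjective (Abelianization.of (G := UGroup M))) y
        have hx : x.m = 0 := by
          have : Multiplicative.ofAdd x.m = (1 : Multiplicative M) := hy
          simpa using this
        refine ⟨QuotientAddGroup.mk x.t, ?_⟩
        show Abelianization.of (⟨0, x.t⟩ : UGroup M) = _
        congr 1
        ext <;> simp [hx]
      · rintro ⟨a, rfl⟩
        obtain ⟨t, rfl⟩ := QuotientAddGroup.mk_surjective a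
        show Abelianization.lift p (Abelianization.of (⟨0, t⟩ : UGroup M)) = 1
        simp [p]
end

section
/- Let G be a group, let M and N be G-modules, and let β : M ⊗_ℤ M → N be a G-equivariant homomorphism (for the diagonal G-action on M ⊗ M) that is symmetric, i.e., β(m ⊗ m') = β(m' ⊗ m) for all m, m'. Let U_β be the abelian group with underlying set N × M and addition (n, m) + (n', m') := (n + n' + β(m ⊗ m'), m + m'), equipped with the coordinatewise G-action; then 0 → N → U_β → M → 0 (with maps n ↦ (n, 0) and (n, m) ↦ m) is a short exact sequence of G-modules. The connecting homomorphism H¹(G, M) → H²(G, N) of this short exact sequence sends the class of any 1-cocycle ζ : G → M to the class of the 2-cocycle (g, h) ↦ β(ζ(g) ⊗ g·ζ(h)); in other words, the connecting map is x ↦ β_*(x ∪ x), the image under β of the cup-product square. -/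
open scoped TensorProduct

/-- (Theorem 2.5 / Corollary 2.7(a)=(b) in group cohomology.)  Let `G` be a group,
`M`, `N` be `G`-modules, and `β : M ⊗_ℤ M → N` a `G`-equivariant symmetric
homomorphism.  Form `U_β := N × M` with addition
`(n, m) + (n', m') = (n + n' + β(m ⊗ m'), m + m')` (encoded by the given function
`uadd`) and the coordinatewise `G`-action (encoded by `usmul`).  Then
`0 → N → U_β → M → 0` is a short exact sequence of `G`-modules, and the connecting
homomorphism `H¹(G, M) → H²(G, N)` sends the class of a 1-cocycle `ζ` to the class
of the 2-cocycle `(g, h) ↦ β(ζ(g) ⊗ g·ζ(h))`, i.e. to `β₊(x ∪ x)`. -/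
theorem self_cup_stmt_7 (G : Type) [Group G] (M N : Type)
    [AddCommGroup M] [AddCommGroup N]
    [DistribMulAction G M] [DistribMulAction G N]
    (β : (M ⊗[ℤ] M) →+ N)
    (hβequiv : ∀ (g : G) (m m' : M), β ((g • m) ⊗ₜ[ℤ] (g • m')) = g • β (m ⊗ₜ[ℤ] m'))
    (hβsymm : ∀ m m' : M, β (m ⊗ₜ[ℤ] m') = β (m' ⊗ₜ[ℤ] m))
    (uadd : N × M → N × M → N × M)
    (huadd : ∀ x y, uadd x y = (x.1 + y.1 + β (x.2 ⊗ₜ[ℤ] y.2), x.2 + y.2))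
    (usmul : G → N × M → N × M)
    (husmul : ∀ g x, usmul g x = (g • x.1, g • x.2)) :
    -- `U_β` is an abelian group:
    (∀ x y, uadd x y = uadd y x) ∧
    (∀ x y z, uadd (uadd x y) z = uadd x (uadd y z)) ∧
    (∀ x, uadd (0, 0) x = x) ∧
    (∀ x, ∃ y, uadd x y = (0, 0)) ∧
    -- the `G`-action makes it a `G`-module:
    (∀ g x y, usmul g (uadd x y) = uadd (usmul g x) (usmul g y)) ∧
    (∀ g h x, usmul (g * h) x = usmul g (usmul h x)) ∧
    (∀ x, usmul 1 x = x) ∧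
    -- `0 → N → U_β → M → 0` is a short exact sequence of `G`-modules,
    -- with maps `n ↦ (n, 0)` and `(n, m) ↦ m`:
    (∀ n n' : N, uadd (n, 0) (n', 0) = (n + n', 0)) ∧
    (∀ (g : G) (n : N), usmul g (n, 0) = (g • n, 0)) ∧
    Function.Injective (fun n : N => ((n, 0) : N × M)) ∧
    (∀ x y, (uadd x y).2 = x.2 + y.2) ∧
    (∀ g x, (usmul g x).2 = g • x.2) ∧
    (∀ x : N × M, x.2 = 0 ↔ ∃ n : N, x = (n, 0)) ∧
    Function.Surjective (fun x : N × M => x.2) ∧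
    -- the connecting homomorphism `H¹(G, M) → H²(G, N)` sends the class of a
    -- 1-cocycle `ζ` to the class of `(g, h) ↦ β(ζ(g) ⊗ g·ζ(h))`:
    (∀ ζ : G → M, (∀ g h, ζ (g * h) = ζ g + g • ζ h) →
      -- `(g, h) ↦ β(ζ(g) ⊗ g·ζ(h))` is a 2-cocycle with values in `N`:
      (∀ g h k : G,
        g • β (ζ h ⊗ₜ[ℤ] (h • ζ k)) - β (ζ (g * h) ⊗ₜ[ℤ] ((g * h) • ζ k))
          + β (ζ g ⊗ₜ[ℤ] (g • ζ (h * k))) - β (ζ g ⊗ₜ[ℤ] (g • ζ h)) = 0) ∧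
      -- for any set-theoretic lift `b : G → U_β` of `ζ`, the 2-cocycle `c`
      -- measuring the failure of `b` to be a cocycle (the connecting cocycle) ...
      (∀ b : G → N × M, (∀ g, (b g).2 = ζ g) →
        ∀ c : G → G → N,
          (∀ g h, uadd (b g) (usmul g (b h)) = uadd (b (g * h)) (c g h, 0)) →
          -- ... is a 2-cocycle with values in `N` ...
          (∀ g h k : G,
            g • c h k - c (g * h) k + c g (h * k) - c g h = 0) ∧
          -- ... whose class equals that of `(g, h) ↦ β(ζ(g) ⊗ g·ζ(h))`:
          ∃ φ : G → N, ∀ g h : G,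
            c g h - β (ζ g ⊗ₜ[ℤ] (g • ζ h)) = g • φ h - φ (g * h) + φ g)) := by

  refine ⟨?_, ?_, ?_, ?_, ?_, ?_, ?_, ?_, ?_, ?_, ?_, ?_, ?_, ?_, ?_⟩
  · intro x y
    rw [huadd, huadd, hβsymm x.2 y.2]
    exact Prod.ext (by abel) (add_comm _ _)
  · intro x y z
    rw [huadd, huadd, huadd, huadd]
    refine Prod.ext ?_ (add_assoc _ _ _)
    simp only [TensorProduct.add_tmul, TensorProduct.tmul_add, map_add]
    abel
  · intro x
    simp [huadd, TensorProduct.zero_tmul]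
  · intro x
    refine ⟨(-x.1 + β (x.2 ⊗ₜ[ℤ] x.2), -x.2), ?_⟩
    rw [huadd]
    simp only [TensorProduct.tmul_neg, map_neg]
    exact Prod.ext (by abel) (by abel)
  · intro g x y
    rw [huadd, husmul, husmul, husmul, huadd]
    exact Prod.ext (by simp [smul_add, hβequiv]) (by simp [smul_add])
  · intro g h x
    simp [husmul, mul_smul]
  · intro x
    simp [husmul]
  · intro n n'
    simp [huadd, TensorProduct.tmul_zero]
  · intro g n
    simp [husmul]
  · intro a b h
    simpa [Prod.ext_iff] using h
  · intro x y; rw [huadd]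
  · intro g x; rw [husmul]
  · intro x
    constructor
    · intro h; exact ⟨x.1, Prod.ext rfl h⟩
    · rintro ⟨n, rfl⟩; rfl
  · intro m; exact ⟨(0, m), rfl⟩
  · intro ζ hζ
    have hA : ∀ g h k : G,
        g • β (ζ h ⊗ₜ[ℤ] (h • ζ k)) - β (ζ (g * h) ⊗ₜ[ℤ] ((g * h) • ζ k))
          + β (ζ g ⊗ₜ[ℤ] (g • ζ (h * k))) - β (ζ g ⊗ₜ[ℤ] (g • ζ h)) = 0 := by
      intro g h k
      rw [← hβequiv, hζ g h, hζ h k, mul_smul]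
      simp only [smul_add, TensorProduct.add_tmul, TensorProduct.tmul_add, map_add]
      abel
    refine ⟨hA, ?_⟩
    intro b hb c hc
    have key : ∀ g h : G,
        c g h = (b g).1 + g • (b h).1 + β (ζ g ⊗ₜ[ℤ] (g • ζ h)) - (b (g * h)).1 := by
      intro g h
      have h1 := congrArg Prod.fst (hc g h)
      rw [huadd, husmul, huadd] at h1
      simp only [hb] at h1
      simp only [TensorProduct.tmul_zero, map_zero, add_zero] at h1
      rw [eq_sub_iff_add_eq, add_comm]
      exact h1.symm
    constructor
    · intro g h k
      simp only [key, hζ, mul_assoc, mul_smul, smul_add, smul_sub, ← hβequiv,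
        TensorProduct.add_tmul, TensorProduct.tmul_add, map_add]
      abel
    · refine ⟨fun g => (b g).1, fun g h => ?_⟩
      rw [key]
      abel
end

section
/- Let G be a group, and regard ℤ/2ℤ and ℤ/4ℤ as trivial G-modules. The connecting homomorphism H¹(G, ℤ/2ℤ) → H²(G, ℤ/2ℤ) associated to the short exact sequence 0 → ℤ/2ℤ → ℤ/4ℤ → ℤ/2ℤ → 0 (the inclusion of the 2-torsion subgroup followed by reduction modulo 2) sends the class of a 1-cocycle (i.e., a group homomorphism) ζ : G → ℤ/2ℤ to the class of the 2-cocycle (g, h) ↦ ζ(g)·ζ(h) (product in ℤ/2ℤ); that is, this connecting map is the cup-product square x ↦ x ∪ x, where ℤ/2ℤ ⊗ ℤ/2ℤ is identified with ℤ/2ℤ. -/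
private lemma bockstein_key : ∀ a b s : ZMod 4, ∀ c : ZMod 2,
    ((a.val : ZMod 2) + (b.val : ZMod 2) = (s.val : ZMod 2)) →
    (2 * (c.val : ZMod 4) = a + b - s) →
    c = (a.val : ZMod 2) * (b.val : ZMod 2) +
      (((b.val / 2 : ℕ) : ZMod 2) - ((s.val / 2 : ℕ) : ZMod 2) + ((a.val / 2 : ℕ) : ZMod 2)) := by
  decide

/-- (Example 2.6 in group cohomology: the Bockstein.)  Regard `ℤ/2ℤ` and `ℤ/4ℤ` as
trivial `G`-modules.  The connecting homomorphism `H¹(G, ℤ/2ℤ) → H²(G, ℤ/2ℤ)` of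
the short exact sequence `0 → ℤ/2ℤ → ℤ/4ℤ → ℤ/2ℤ → 0` (inclusion of the 2-torsion
subgroup, then reduction mod 2) sends the class of a homomorphism
`ζ : G → ℤ/2ℤ` to the class of the 2-cocycle `(g, h) ↦ ζ(g)·ζ(h)`; that is, the
connecting map is `x ↦ x ∪ x`. -/
theorem self_cup_stmt_8 (G : Type) [Group G]
    (ι : ZMod 2 → ZMod 4) (hι : ∀ x : ZMod 2, ι x = 2 * (x.val : ZMod 4))
    (p : ZMod 4 → ZMod 2) (hp : ∀ y : ZMod 4, p y = (y.val : ZMod 2)) :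
    -- `0 → ℤ/2ℤ → ℤ/4ℤ → ℤ/2ℤ → 0` is a short exact sequence:
    Function.Injective ι ∧
    (∀ x y : ZMod 2, ι (x + y) = ι x + ι y) ∧
    (∀ y z : ZMod 4, p (y + z) = p y + p z) ∧
    (∀ y : ZMod 4, p y = 0 ↔ ∃ x : ZMod 2, ι x = y) ∧
    Function.Surjective p ∧
    -- the connecting homomorphism is the cup-product square:
    (∀ ζ : G → ZMod 2, (∀ g h : G, ζ (g * h) = ζ g + ζ h) →
      -- `(g,h) ↦ ζ(g)ζ(h)` is a 2-cocycle:
      (∀ g h k : G,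
        ζ h * ζ k - ζ (g * h) * ζ k + ζ g * ζ (h * k) - ζ g * ζ h = 0) ∧
      -- for any set-theoretic lift `b` of `ζ` along `p`, the connecting 2-cocycle
      -- `c` (characterized by `ι(c(g,h)) = b(g) + b(h) - b(gh)`) is a 2-cocycle
      -- with class `ζ ∪ ζ`:
      (∀ b : G → ZMod 4, (∀ g, p (b g) = ζ g) →
        ∀ c : G → G → ZMod 2,
          (∀ g h : G, ι (c g h) = b g + b h - b (g * h)) →
          (∀ g h k : G,
            c h k - c (g * h) k + c g (h * k) - c g h = 0) ∧
          ∃ φ : G → ZMod 2, ∀ g h : G,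
            c g h - ζ g * ζ h = φ h - φ (g * h) + φ g)) := by
  refine ⟨?_, ?_, ?_, ?_, ?_, ?_⟩
  · intro x y h
    rw [hι, hι] at h
    revert h; revert x y; decide
  · intro x y; rw [hι, hι, hι]; revert x y; decide
  · intro y z; rw [hp, hp, hp]; revert y z; decide
  · intro y
    simp only [hp, hι]
    revert y; decide
  · intro z
    have : ∃ y : ZMod 4, (y.val : ZMod 2) = z := by revert z; decide
    obtain ⟨y, hy⟩ := this
    exact ⟨y, by rw [hp]; exact hy⟩
  · intro ζ hζ
    constructor
    · intro g h k
      rw [hζ, hζ]; ring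
    · intro b hb c hc
      set φ : G → ZMod 2 := fun g => (((b g).val / 2 : ℕ) : ZMod 2) with hφ
      have key : ∀ g h : G, c g h - ζ g * ζ h = φ h - φ (g * h) + φ g := by
        intro g h
        have h1 : ((b g).val : ZMod 2) = ζ g := by rw [← hp]; exact hb g
        have h2 : ((b h).val : ZMod 2) = ζ h := by rw [← hp]; exact hb h
        have h3 : ((b (g * h)).val : ZMod 2) = ζ (g * h) := by rw [← hp]; exact hb _
        have hsum : ((b g).val : ZMod 2) + ((b h).val : ZMod 2) = ((b (g * h)).val : ZMod 2) := by
          rw [h1, h2, h3, hζ]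
        have hιc : 2 * ((c g h).val : ZMod 4) = b g + b h - b (g * h) := by
          rw [← hι]; exact hc g h
        have := bockstein_key (b g) (b h) (b (g * h)) (c g h) hsum hιc
        rw [this, h1, h2, hφ]
        ring
      refine ⟨?_, ⟨φ, key⟩⟩
      intro g h k
      have e1 := key h k
      have e2 := key (g * h) k
      have e3 := key g (h * k)
      have e4 := key g h
      have hc1 : c h k = ζ h * ζ k + (φ k - φ (h * k) + φ h) := by linear_combination e1
      have hc2 : c (g * h) k = ζ (g * h) * ζ k + (φ k - φ (g * h * k) + φ (g * h)) := by
        linear_combination e2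
      have hc3 : c g (h * k) = ζ g * ζ (h * k) + (φ (h * k) - φ (g * (h * k)) + φ g) := by
        linear_combination e3
      have hc4 : c g h = ζ g * ζ h + (φ h - φ (g * h) + φ g) := by linear_combination e4
      rw [hc1, hc2, hc3, hc4, hζ g h, hζ h k, mul_assoc]
      ring
end

section
/- Let M and N be abelian groups with Ext¹_ℤ(M, N) = 0. Then every symmetric ℤ-bilinear map b : M × M → N is the polar form of a quadratic map: there exists a function q : M → N with q(m + m') − q(m) − q(m') = b(m, m') for all m, m' ∈ M. -/
/-!
A symmetric biadditive `b : M → M → N` is a 2-cocycle, so it defines an abelian extension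
`0 → N → E → M → 0` with `E = N × M` and `(n, m) + (n', m') = (n + n' + b m m', m + m')`.
Since `Ext¹(M, N) = 0`, this extension splits by an additive section `s`, and then
`q := fst ∘ s` has polar form `b`.
-/

universe u v

open CategoryTheory Opposite

namespace CategoryTheory

variable {R : Type*} [Ring R] {C : Type*} [Category C] [Abelian C] [Linear R C]
  [EnoughProjectives C]

lemma ProjectiveResolution.exists_d_comp_eq_of_subsingleton_ext {X Y : C}
    (P : ProjectiveResolution X) (hExt : Subsingleton (((Ext R C 1).obj (op X)).obj Y))
    {f : P.complex.X 1 ⟶ Y} (hf : P.complex.d 2 1 ≫ f = 0) :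
    ∃ g : P.complex.X 0 ⟶ Y, P.complex.d 1 0 ≫ g = f := by
  have hexact : ((P.complex.linearYonedaObj R Y).sc' 0 1 2).Exact := by
    rw [← HomologicalComplex.exactAt_iff' _ 0 1 2 (by simp) (by simp),
      HomologicalComplex.exactAt_iff_isZero_homology]
    exact (ModuleCat.isZero_of_subsingleton _).of_iso (P.isoExt 1 Y).symm
  exact (ShortComplex.moduleCat_exact_iff _).1 hexact f hf

/- Lift the augmentation `π₀ : P₀ → X₃` of a projective resolution to `φ : P₀ → X₂`. Then
`d₁ ≫ φ` factors through a 1-cocycle `ψ : P₁ → X₁`, which is a coboundary `d₁ ≫ Ψ` since `Ext¹`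
vanishes, and `φ - Ψ ≫ f` descends along `π₀` to a section of `g`. -/
lemma ShortComplex.ShortExact.isSplitEpi_g_of_subsingleton_ext {S : ShortComplex C}
    (hS : S.ShortExact) (hExt : Subsingleton (((Ext R C 1).obj (Opposite.op S.X₃)).obj S.X₁)) :
    IsSplitEpi S.g := by
  have := hS.mono_f
  have := hS.epi_g
  let P := ProjectiveResolution.of S.X₃
  let π₀ : P.complex.X 0 ⟶ S.X₃ := P.π.f 0
  have : Epi π₀ := inferInstanceAs (Epi (P.π.f 0))
  let φ : P.complex.X 0 ⟶ S.X₂ := Projective.factorThru π₀ S.g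
  have hφ : φ ≫ S.g = π₀ := Projective.factorThru_comp π₀ S.g
  let ψ : P.complex.X 1 ⟶ S.X₁ := hS.exact.lift (P.complex.d 1 0 ≫ φ)
    (by rw [Category.assoc, hφ]; exact P.complex_d_comp_π_f_zero)
  have hψ : P.complex.d 2 1 ≫ ψ = 0 := by
    simp [← cancel_mono S.f, ψ]
  obtain ⟨Ψ, hΨ⟩ := P.exists_d_comp_eq_of_subsingleton_ext hExt hψ
  let s : S.X₃ ⟶ S.X₂ := P.exact₀.desc (φ - Ψ ≫ S.f) (by simp [reassoc_of% hΨ, ψ])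
  have hs : π₀ ≫ s = φ - Ψ ≫ S.f := P.exact₀.g_desc _ _
  refine ⟨s, (cancel_epi π₀).1 ?_⟩
  simp [reassoc_of% hs, hφ]

end CategoryTheory

theorem Function.Exact.exists_rightInverse_of_subsingleton_ext {R : Type u} [Ring R]
    [Small.{v} R] [Linear R (ModuleCat.{v} R)] {M N E : Type v} [AddCommGroup M]
    [AddCommGroup N] [AddCommGroup E] [Module R M] [Module R N] [Module R E]
    {f : N →ₗ[R] E} {g : E →ₗ[R] M} (hfg : Function.Exact f g) (hf : Function.Injective f)
    (hg : Function.Surjective g)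
    (hExt : Subsingleton
      (((Ext R (ModuleCat.{v} R) 1).obj (op (ModuleCat.of R M))).obj (ModuleCat.of R N))) :
    ∃ s : M →ₗ[R] E, g ∘ₗ s = LinearMap.id := by
  let S := ModuleCat.shortComplexOfCompEqZero f g hfg.linearMap_comp_eq_zero
  have := (ModuleCat.shortComplex_shortExact S hfg hf hg).isSplitEpi_g_of_subsingleton_ext hExt
  exact ⟨(section_ S.g).hom, congrArg ModuleCat.Hom.hom (IsSplitEpi.id S.g)⟩

/- The extension of `M` by `N` with cocycle `b`; the symmetry `hb` is what makes it abelian. -/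
@[ext]
structure TwistedProd {M N : Type*} [AddCommGroup M] [AddCommGroup N] (b : M →+ M →+ N)
    (hb : ∀ m m' : M, b m m' = b m' m) where
  fst : N
  snd : M

namespace TwistedProd

variable {M N : Type*} [AddCommGroup M] [AddCommGroup N] {b : M →+ M →+ N}
  {hb : ∀ m m' : M, b m m' = b m' m}

instance : Add (TwistedProd b hb) := ⟨fun x y => ⟨x.fst + y.fst + b x.snd y.snd, x.snd + y.snd⟩⟩
instance : Zero (TwistedProd b hb) := ⟨⟨0, 0⟩⟩
instance : Neg (TwistedProd b hb) := ⟨fun x => ⟨-x.fst + b x.snd x.snd, -x.snd⟩⟩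

@[simp] theorem fst_add (x y : TwistedProd b hb) : (x + y).fst = x.fst + y.fst + b x.snd y.snd :=
  rfl
@[simp] theorem snd_add (x y : TwistedProd b hb) : (x + y).snd = x.snd + y.snd := rfl
@[simp] theorem fst_zero : (0 : TwistedProd b hb).fst = 0 := rfl
@[simp] theorem snd_zero : (0 : TwistedProd b hb).snd = 0 := rfl
@[simp] theorem fst_neg (x : TwistedProd b hb) : (-x).fst = -x.fst + b x.snd x.snd := rfl
@[simp] theorem snd_neg (x : TwistedProd b hb) : (-x).snd = -x.snd := rfl

instance : AddCommGroup (TwistedProd b hb) where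
  add_assoc x y z := by ext <;> simp <;> abel
  zero_add x := by ext <;> simp
  add_zero x := by ext <;> simp
  neg_add_cancel x := by ext <;> simp
  add_comm x y := by ext <;> simp [hb x.snd, add_comm]
  nsmul := nsmulRec
  zsmul := zsmulRec

def inl : N →+ TwistedProd b hb where
  toFun n := ⟨n, 0⟩
  map_zero' := rfl
  map_add' n n' := by ext <;> simp

def sndHom : TwistedProd b hb →+ M where
  toFun := snd
  map_zero' := rfl
  map_add' _ _ := rfl

theorem inl_injective : Function.Injective (inl : N →+ TwistedProd b hb) :=
  fun _ _ h => congrArg fst h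

theorem sndHom_surjective : Function.Surjective (sndHom : TwistedProd b hb →+ M) :=
  fun m => ⟨⟨0, m⟩, rfl⟩

theorem exact_inl_sndHom : Function.Exact (inl : N →+ TwistedProd b hb) sndHom := by
  intro x
  constructor
  · intro hx
    exact ⟨x.fst, TwistedProd.ext rfl hx.symm⟩
  · rintro ⟨n, rfl⟩
    rfl

end TwistedProd

/-- (Key step for Corollary 2.7(d) / diagram (14).)  If `M`, `N` are abelian
groups with `Ext¹_ℤ(M, N) = 0`, then every symmetric ℤ-bilinear map
`b : M × M → N` is the polar form of a quadratic map: there is `q : M → N` with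
`q(m + m') − q(m) − q(m') = b(m, m')` for all `m`, `m'`. -/
theorem self_cup_stmt_9 (M N : Type) [AddCommGroup M] [AddCommGroup N]
    (hExt : Subsingleton
      (((Ext ℤ (ModuleCat ℤ) 1).obj (Opposite.op (ModuleCat.of ℤ M))).obj
        (ModuleCat.of ℤ N)))
    (b : M →+ M →+ N) (hsymm : ∀ m m' : M, b m m' = b m' m) :
    ∃ q : M → N, ∀ m m' : M, q (m + m') - q m - q m' = b m m' := by
  have hexact : Function.Exact (TwistedProd.inl (hb := hsymm)).toIntLinearMap
      TwistedProd.sndHom.toIntLinearMap := TwistedProd.exact_inl_sndHom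
  obtain ⟨s, hs⟩ := hexact.exists_rightInverse_of_subsingleton_ext
    TwistedProd.inl_injective TwistedProd.sndHom_surjective hExt
  have hsnd (m : M) : (s m).snd = m := LinearMap.congr_fun hs m
  refine ⟨fun m => (s m).fst, fun m m' => ?_⟩
  simp only [map_add, TwistedProd.fst_add, hsnd]
  abel
end

section
/- Let k be a field, G a finite cyclic group, and 0 → A → B → C → 0 a short exact sequence of finite-dimensional k-linear representations of G. Suppose the induced surjection of dual representations r : B* → A* admits a G-equivariant set-theoretic section, i.e., a function t : A* → B* (not necessarily linear) with r ∘ t = id and t(g·f) = g·t(f) for all g ∈ G, f ∈ A*. Then the connecting homomorphism C^G → H¹(G, A), which sends c ∈ C^G to the class of the 1-cocycle g ↦ g·b − b for any b ∈ B mapping to c, is the zero map. -/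
/-!
Let `σ` generate `G` and let `b ∈ B` map to `c ∈ C^G`. The class of `γ ↦ γ·b − b` vanishes
exactly when `b ∈ B^G + A`, and since `B^G = ker (σ − 1)` it suffices, by duality, to show that
every functional `ψ ∘ (σ − 1)` vanishing on `A` vanishes on `b`. Such a `ψ` restricts to a
`G`-invariant functional `χ` on `A`. The equivariant section gives an invariant lift `t χ` on `B`,
and `ψ − t χ` vanishes on `A`, so it factors through `C`. Both `t χ` and anything pulled back
from `C` take the same value at `σ·b` and at `b`.
-/

open Module LinearMap

theorem LinearMap.exists_dualMap_eq_of_dualMap_eq_zero {K U V W : Type*} [Field K]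
    [AddCommGroup U] [Module K U] [AddCommGroup V] [Module K V] [AddCommGroup W] [Module K W]
    {f : U →ₗ[K] V} {g : V →ₗ[K] W} (hfg : range f = ker g) {ψ : Dual K V}
    (hψ : f.dualMap ψ = 0) : ∃ η : Dual K W, g.dualMap η = ψ := by
  have hψ' : ψ ∈ ker f.dualMap := hψ
  rwa [ker_dualMap_eq_dualAnnihilator_range, hfg,
    ← range_dualMap_eq_dualAnnihilator_ker] at hψ'

namespace Representation

variable {k G A B C : Type*} [Field k] [Group G]
  [AddCommGroup A] [Module k A] [AddCommGroup B] [Module k B] [AddCommGroup C] [Module k C]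
  {ρA : Representation k G A} {ρB : Representation k G B} {ρC : Representation k G C}
  {f : A →ₗ[k] B} {g : B →ₗ[k] C}

theorem mem_invariants_dual_iff {V : Type*} [AddCommGroup V] [Module k V]
    (ρ : Representation k G V) (φ : Dual k V) :
    φ ∈ ρ.dual.invariants ↔ ∀ γ v, φ (ρ γ v) = φ v := by
  simp only [mem_invariants, LinearMap.ext_iff, dual_apply, Dual.transpose_apply,
    LinearMap.comp_apply]
  exact ⟨fun h γ v => by simpa using h γ⁻¹ v, fun h γ v => h γ⁻¹ v⟩

theorem invariants_eq_ker_sub_one {V : Type*} [AddCommGroup V] [Module k V]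
    (ρ : Representation k G V) (σ : G) (hσ : ∀ x, x ∈ Subgroup.zpowers σ) :
    ρ.invariants = ker (ρ σ - 1) := by
  ext v
  rw [mem_invariants_iff_of_forall_mem_zpowers ρ σ hσ, mem_ker, LinearMap.sub_apply,
    sub_eq_zero, Module.End.one_apply]

theorem apply_eq_of_dualMap_mem_invariants
    (hgequiv : ∀ γ b, g (ρB γ b) = ρC γ (g b)) (hexact : range f = ker g)
    (t : Dual k A → Dual k B) (hsection : ∀ φ, f.dualMap (t φ) = φ)
    (htequiv : ∀ γ φ, t (ρA.dual γ φ) = ρB.dual γ (t φ))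
    {ψ : Dual k B} (hψ : f.dualMap ψ ∈ ρA.dual.invariants)
    {b : B} (hb : g b ∈ ρC.invariants) (γ : G) : ψ (ρB γ b) = ψ b := by
  set β := t (f.dualMap ψ)
  have hβ : β ∈ ρB.dual.invariants := fun γ => by rw [← htequiv, hψ γ]
  obtain ⟨η, hη⟩ : ∃ η : Dual k C, g.dualMap η = ψ - β :=
    exists_dualMap_eq_of_dualMap_eq_zero hexact (by rw [map_sub, hsection, sub_self])
  have hψβ : ∀ x, ψ x = β x + η (g x) := fun x => by
    rw [← dualMap_apply, hη, LinearMap.sub_apply, add_sub_cancel]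
  rw [hψβ, hψβ, (mem_invariants_dual_iff ρB β).mp hβ, hgequiv, hb γ]

theorem mem_invariants_sup_range_of_generator (σ : G) (hσ : ∀ x, x ∈ Subgroup.zpowers σ)
    (hfequiv : ∀ γ a, f (ρA γ a) = ρB γ (f a))
    (hgequiv : ∀ γ b, g (ρB γ b) = ρC γ (g b)) (hexact : range f = ker g)
    (t : Dual k A → Dual k B) (hsection : ∀ φ, f.dualMap (t φ) = φ)
    (htequiv : ∀ γ φ, t (ρA.dual γ φ) = ρB.dual γ (t φ))
    {b : B} (hb : g b ∈ ρC.invariants) : b ∈ ρB.invariants ⊔ range f := by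
  rw [← Subspace.forall_mem_dualAnnihilator_apply_eq_zero_iff]
  intro φ hφ
  rw [Submodule.dualAnnihilator_sup_eq, Submodule.mem_inf, invariants_eq_ker_sub_one ρB σ hσ,
    ← range_dualMap_eq_dualAnnihilator_ker] at hφ
  obtain ⟨⟨ψ, rfl⟩, hφf⟩ := hφ
  have hψ : f.dualMap ψ ∈ ρA.dual.invariants := by
    rw [mem_invariants_iff_of_forall_mem_zpowers _ σ⁻¹ (by rwa [Subgroup.zpowers_inv])]
    ext a
    have hσa := (Submodule.mem_dualAnnihilator _).mp hφf (f a) (mem_range_self f a)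
    simp only [dualMap_apply, LinearMap.sub_apply, Module.End.one_apply, map_sub,
      sub_eq_zero] at hσa
    simpa [dual_apply, Dual.transpose_apply, ← hfequiv] using hσa
  simp only [dualMap_apply, LinearMap.sub_apply, Module.End.one_apply, map_sub]
  rw [apply_eq_of_dualMap_mem_invariants hgequiv hexact t hsection htequiv hψ hb, sub_self]

end Representation

theorem self_cup_stmt_13_general (k : Type) [Field k] (G : Type) [Group G]
    (hG : IsCyclic G)
    (A B C : Type) [AddCommGroup A] [Module k A]
    [AddCommGroup B] [Module k B]
    [AddCommGroup C] [Module k C]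
    (ρA : Representation k G A) (ρB : Representation k G B)
    (ρC : Representation k G C)
    (f : A →ₗ[k] B) (g : B →ₗ[k] C)
    (hfequiv : ∀ (γ : G) (a : A), f (ρA γ a) = ρB γ (f a))
    (hgequiv : ∀ (γ : G) (b : B), g (ρB γ b) = ρC γ (g b))
    (hexact : LinearMap.range f = LinearMap.ker g)
    -- a `G`-equivariant set-theoretic section of the dual surjection `B* → A*`
    -- (which is precomposition with `f`):
    (t : Module.Dual k A → Module.Dual k B)
    (hsection : ∀ φ : Module.Dual k A, f.dualMap (t φ) = φ)
    (htequiv : ∀ (γ : G) (φ : Module.Dual k A),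
      t (ρA.dual γ φ) = ρB.dual γ (t φ)) :
    ∀ c : C, (∀ γ : G, ρC γ c = c) →
      ∀ b : B, g b = c →
        ∃ a : A, ∀ γ : G, ρB γ b - b = f (ρA γ a - a) := by
  intro c hc b hb
  obtain ⟨σ, hσ⟩ := hG.exists_generator
  obtain ⟨w, hw, _, ⟨a, rfl⟩, rfl⟩ := Submodule.mem_sup.mp <|
    Representation.mem_invariants_sup_range_of_generator σ hσ hfequiv hgequiv hexact t hsection
      htequiv (hb ▸ hc : g b ∈ ρC.invariants)
  refine ⟨a, fun γ => ?_⟩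
  rw [map_add, hw γ, map_sub, hfequiv]
  abel

/-- (Lemma 3.2(b).)  Let `k` be a field, `G` a finite cyclic group, and
`0 → A → B → C → 0` a short exact sequence of finite-dimensional `k`-linear
representations of `G`.  If the induced surjection of dual representations
`B* → A*` admits a `G`-equivariant set-theoretic section, then the connecting
homomorphism `C^G → H¹(G, A)` is zero: every `c ∈ C^G` lifts, after choosing any
`b ∈ B` mapping to it, to a coboundary, i.e. there is `a ∈ A` with
`γ·b − b = f(γ·a − a)` for all `γ ∈ G`. -/
theorem self_cup_stmt_13 (k : Type) [Field k] (G : Type) [Group G] [Finite G]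
    (hG : IsCyclic G)
    (A B C : Type) [AddCommGroup A] [Module k A] [FiniteDimensional k A]
    [AddCommGroup B] [Module k B] [FiniteDimensional k B]
    [AddCommGroup C] [Module k C] [FiniteDimensional k C]
    (ρA : Representation k G A) (ρB : Representation k G B)
    (ρC : Representation k G C)
    (f : A →ₗ[k] B) (g : B →ₗ[k] C)
    (hfequiv : ∀ (γ : G) (a : A), f (ρA γ a) = ρB γ (f a))
    (hgequiv : ∀ (γ : G) (b : B), g (ρB γ b) = ρC γ (g b))
    (hfinj : Function.Injective f) (hgsurj : Function.Surjective g)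
    (hexact : LinearMap.range f = LinearMap.ker g)
    -- a `G`-equivariant set-theoretic section of the dual surjection `B* → A*`
    -- (which is precomposition with `f`):
    (t : Module.Dual k A → Module.Dual k B)
    (hsection : ∀ φ : Module.Dual k A, f.dualMap (t φ) = φ)
    (htequiv : ∀ (γ : G) (φ : Module.Dual k A),
      t (ρA.dual γ φ) = ρB.dual γ (t φ)) :
    ∀ c : C, (∀ γ : G, ρC γ c = c) →
      ∀ b : B, g b = c →
        ∃ a : A, ∀ γ : G, ρB γ b - b = f (ρA γ a - a) :=
  self_cup_stmt_13_general k G hG A B C ρA ρB ρC f g hfequiv hgequiv hexact t hsection htequiv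
end
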